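/- (Theorem 1, exactness of probabilistic ABC.) The conditional distribution of θ given acceptance in the rejection scheme (θ ~ π, X | θ ~ f(·|θ), U ~ Uniform[0,1] independent, accept iff U ≤ π_ε(D − X)/c) is equal to the conditional distribution of θ̂ given D' = D in the additive-error model θ̂ ~ π, X | θ̂ ~ f(·|θ̂), ε ~ π_ε independent, D' := X + ε; both have density θ ↦ π(θ) ∫ π_ε(D − x) f(x|θ) dx / ∫ π(θ') ∫ π_ε(D − x) f(x|θ') dx dθ', provided this normalising integral is positive and finite. -/

import Mathlib

/-!
Accepting `(θ, X)` when `U ≤ π_ε(D - X) / c` multiplies the joint density `π(θ) f(x|θ)` by the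
acceptance probability `π_ε(D - x) / c`; integrating out `x` shows that the accepted `θ` has
density proportional to `π(θ) ∫ π_ε(D - x) f(x|θ) dx`, and `c` cancels on normalising.
In the error model the substitution `d = x + ε` (translation invariance of Lebesgue measure)
gives `(θ̂, D')` the joint density `π(θ) ∫ π_ε(d - x) f(x|θ) dx`, so by Fubini its mass on
`B × C` is the integral over `d ∈ C` of the marginal density of `D'` at `d` times the mass of
`B` under the same normalised density with `D` replaced by `d`.
-/

open MeasureTheory ProbabilityTheory Set
open scoped ENNReal

section General

variable {α β : Type*} [MeasurableSpace α] [MeasurableSpace β]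

lemma map_fst_withDensity_prod (μ : Measure α) (ν : Measure β) [SFinite μ] [SFinite ν]
    {h : α × β → ℝ≥0∞} (hh : Measurable h) :
    ((μ.prod ν).withDensity h).map Prod.fst = μ.withDensity fun a => ∫⁻ b, h (a, b) ∂ν := by
  ext s hs
  rw [Measure.map_apply measurable_fst hs, withDensity_apply _ (measurable_fst hs),
    withDensity_apply _ hs, ← prod_univ, ← Measure.prod_restrict, Measure.restrict_univ,
    lintegral_prod _ hh.aemeasurable]

lemma map_fst_restrict_prod_uniform_le (ρ : Measure α) [SFinite ρ] {g : α → ℝ} (hg : Measurable g)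
    (hg_le : ∀ a, g a ≤ 1) :
    ((ρ.prod (volume.restrict (Icc (0 : ℝ) 1))).restrict {ω | ω.2 ≤ g ω.1}).map Prod.fst
      = ρ.withDensity fun a => ENNReal.ofReal (g a) := by
  have hA : MeasurableSet {ω : α × ℝ | ω.2 ≤ g ω.1} :=
    measurableSet_le measurable_snd (hg.comp measurable_fst)
  rw [← withDensity_indicator_one hA, map_fst_withDensity_prod _ _ (measurable_one.indicator hA)]
  congr 1
  funext a
  have hslice : (fun u => {ω : α × ℝ | ω.2 ≤ g ω.1}.indicator 1 (a, u))
      = (Iic (g a)).indicator (1 : ℝ → ℝ≥0∞) := by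
    funext u; simp [indicator_apply]
  have hinter : Iic (g a) ∩ Icc 0 1 = Icc 0 (g a) := by
    ext u
    simp only [mem_inter_iff, mem_Iic, mem_Icc]
    exact ⟨fun h => ⟨h.2.1, h.1⟩, fun h => ⟨h.2, h.1, h.2.trans (hg_le a)⟩⟩
  rw [hslice, lintegral_indicator_one measurableSet_Iic, Measure.restrict_apply measurableSet_Iic,
    hinter, Real.volume_Icc, sub_zero]

lemma map_cond (μ : Measure α) (s : Set α) {f : α → β} (hf : Measurable f) :
    (μ[|s]).map f = ((μ.restrict s).map f univ)⁻¹ • (μ.restrict s).map f := by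
  rw [ProbabilityTheory.cond, Measure.map_smul, Measure.map_apply hf MeasurableSet.univ,
    preimage_univ, Measure.restrict_apply_univ]

lemma inv_univ_smul_withDensity_ofReal (μ : Measure α) {h : α → ℝ} (hh : Integrable h μ)
    (hh_nonneg : ∀ a, 0 ≤ h a) (hpos : 0 < ∫ a, h a ∂μ) :
    (μ.withDensity (fun a => ENNReal.ofReal (h a)) univ)⁻¹
        • μ.withDensity (fun a => ENNReal.ofReal (h a))
      = μ.withDensity fun a => ENNReal.ofReal (h a / ∫ a, h a ∂μ) := by
  rw [withDensity_apply _ MeasurableSet.univ, Measure.restrict_univ,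
    ← ofReal_integral_eq_lintegral_ofReal hh (ae_of_all _ hh_nonneg),
    ← withDensity_smul' _ _ (ENNReal.inv_ne_top.2 (ENNReal.ofReal_pos.2 hpos).ne')]
  congr 1
  funext a
  rw [Pi.smul_apply, smul_eq_mul, ← ENNReal.ofReal_inv_of_pos hpos,
    ← ENNReal.ofReal_mul (inv_nonneg.2 hpos.le), inv_mul_eq_div]

end General

section Densities

variable {α : Type*} [MeasurableSpace α] {μ : Measure α}

lemma lintegral_ofReal_eq_one {g : α → ℝ} (hg_nonneg : ∀ a, 0 ≤ g a) (hg : ∫ a, g a ∂μ = 1) :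
    ∫⁻ a, ENNReal.ofReal (g a) ∂μ = 1 := by
  rw [← ofReal_integral_eq_lintegral_ofReal (.of_integral_ne_zero (hg ▸ one_ne_zero))
    (ae_of_all _ hg_nonneg), hg, ENNReal.ofReal_one]

lemma lintegral_ofReal_mul_ofReal {a : ℝ} {u w : α → ℝ} (ha : 0 ≤ a) (hu : ∀ x, 0 ≤ u x)
    (hw : ∀ x, 0 ≤ w x) (hwu : Integrable (fun x => w x * u x) μ) :
    ∫⁻ x, ENNReal.ofReal (a * u x) * ENNReal.ofReal (w x) ∂μ
      = ENNReal.ofReal (a * ∫ x, w x * u x ∂μ) := by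
  rw [← integral_const_mul, ofReal_integral_eq_lintegral_ofReal (hwu.const_mul a)
    (ae_of_all _ fun x => mul_nonneg ha (mul_nonneg (hw x) (hu x)))]
  refine lintegral_congr fun x => ?_
  rw [← ENNReal.ofReal_mul (mul_nonneg ha (hu x))]
  ring_nf

lemma integral_mul_setIntegral_div_integral {g : α → ℝ} (hg : Integrable g μ)
    (hg_nonneg : ∀ a, 0 ≤ g a) {B : Set α} (hB : MeasurableSet B) :
    (∫ a, g a ∂μ) * ∫ a in B, g a / ∫ a, g a ∂μ ∂μ = ∫ a in B, g a ∂μ := by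
  -- if `∫ g = 0` then also `∫_B g = 0`, so the junk value `x / 0 = 0` does no harm
  rcases eq_or_ne (∫ a, g a ∂μ) 0 with hZ | hZ
  · rw [hZ, zero_mul]
    refine (le_antisymm ?_ (setIntegral_nonneg hB fun a _ => hg_nonneg a)).symm
    exact hZ ▸ setIntegral_le_integral hg (ae_of_all _ hg_nonneg)
  · rw [integral_div, mul_div_cancel₀ _ hZ]

end Densities

section Likelihood

variable {Θ 𝒳 : Type*} [MeasurableSpace Θ] [MeasurableSpace 𝒳] [AddCommGroup 𝒳]
  [MeasurableSub₂ 𝒳] {ν : Measure 𝒳} {πε : 𝒳 → ℝ} {c : ℝ}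

lemma integrable_comp_sub_mul {g : 𝒳 → ℝ} (hε_meas : Measurable πε) (hε_nonneg : ∀ r, 0 ≤ πε r)
    (hεc : ∀ r, πε r ≤ c) (hg : Integrable g ν) (y : 𝒳) :
    Integrable (fun x => πε (y - x) * g x) ν :=
  hg.bdd_mul (hε_meas.comp (measurable_const.sub measurable_id)).aestronglyMeasurable
    (ae_of_all _ fun _ => (Real.norm_of_nonneg (hε_nonneg _)).trans_le (hεc _))

lemma integral_comp_sub_mul_le {g : 𝒳 → ℝ} (hε_meas : Measurable πε) (hε_nonneg : ∀ r, 0 ≤ πε r)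
    (hεc : ∀ r, πε r ≤ c) (hg_nonneg : ∀ x, 0 ≤ g x) (hg : ∫ x, g x ∂ν = 1) (y : 𝒳) :
    ∫ x, πε (y - x) * g x ∂ν ≤ c := by
  have hg_int : Integrable g ν := .of_integral_ne_zero (hg ▸ one_ne_zero)
  calc ∫ x, πε (y - x) * g x ∂ν
      ≤ ∫ x, c * g x ∂ν :=
        integral_mono (integrable_comp_sub_mul hε_meas hε_nonneg hεc hg_int y)
          (hg_int.const_mul c) fun x => mul_le_mul_of_nonneg_right (hεc _) (hg_nonneg x)
    _ = c := by rw [integral_const_mul, hg, mul_one]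

lemma measurable_integral_comp_sub_mul [SFinite ν] {f : Θ → 𝒳 → ℝ} (hε_meas : Measurable πε)
    (hf_meas : Measurable (Function.uncurry f)) :
    Measurable fun q : Θ × 𝒳 => ∫ x, πε (q.2 - x) * f q.1 x ∂ν :=
  ((hε_meas.comp (measurable_fst.snd.sub measurable_snd)).mul
    (hf_meas.comp (measurable_fst.fst.prodMk measurable_snd))).stronglyMeasurable
    |>.integral_prod_right'.measurable

lemma integrable_mul_integral_comp_sub_mul [SFinite ν] {μ : Measure Θ} {π : Θ → ℝ}
    {f : Θ → 𝒳 → ℝ} (hπ : Integrable π μ) (hf_meas : Measurable (Function.uncurry f))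
    (hf_nonneg : ∀ θ x, 0 ≤ f θ x) (hf_int : ∀ θ, ∫ x, f θ x ∂ν = 1) (hε_meas : Measurable πε)
    (hε_nonneg : ∀ r, 0 ≤ πε r) (hεc : ∀ r, πε r ≤ c) (y : 𝒳) :
    Integrable (fun θ => π θ * ∫ x, πε (y - x) * f θ x ∂ν) μ :=
  hπ.mul_bdd ((measurable_integral_comp_sub_mul hε_meas hf_meas).comp
      (measurable_id.prodMk measurable_const)).aestronglyMeasurable
    (ae_of_all _ fun θ => (Real.norm_of_nonneg (integral_nonneg fun x =>
      mul_nonneg (hε_nonneg _) (hf_nonneg θ x))).trans_le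
      (integral_comp_sub_mul_le hε_meas hε_nonneg hεc (hf_nonneg θ) (hf_int θ) y))

end Likelihood

section Convolution

variable {Θ G : Type*} [MeasurableSpace Θ] [MeasurableSpace G] [AddCommGroup G]
  [MeasurableAdd₂ G] [MeasurableSub₂ G] (ρ : Measure Θ) (μ : Measure G) [SFinite μ]
  [μ.IsAddLeftInvariant]

lemma map_add_withDensity_prod {h : Θ × G × G → ℝ≥0∞} (hh : Measurable h) :
    ((ρ.prod (μ.prod μ)).withDensity h).map (fun ω => (ω.1, ω.2.1 + ω.2.2))
      = (ρ.prod μ).withDensity fun q => ∫⁻ x, h (q.1, x, q.2 - x) ∂μ := by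
  have hT : Measurable fun ω : Θ × G × G => (ω.1, ω.2.1 + ω.2.2) :=
    measurable_fst.prodMk (measurable_snd.fst.add measurable_snd.snd)
  ext S hS
  set φ := S.indicator (1 : Θ × G → ℝ≥0∞)
  have hφ : Measurable φ := measurable_one.indicator hS
  have hshift : ∀ θ x, ∫⁻ e, φ (θ, x + e) * h (θ, x, e) ∂μ
      = ∫⁻ y, φ (θ, y) * h (θ, x, y - x) ∂μ := fun θ x => by
    rw [← lintegral_add_left_eq_self (fun y => φ (θ, y) * h (θ, x, y - x)) x]
    simp only [add_sub_cancel_left]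
  calc ((ρ.prod (μ.prod μ)).withDensity h).map (fun ω => (ω.1, ω.2.1 + ω.2.2)) S
      = ∫⁻ ω, φ (ω.1, ω.2.1 + ω.2.2) * h ω ∂(ρ.prod (μ.prod μ)) := by
        rw [Measure.map_apply hT hS, withDensity_apply _ (hT hS), ← lintegral_indicator (hT hS)]
        congr 1; funext ω
        by_cases hω : (ω.1, ω.2.1 + ω.2.2) ∈ S <;> simp [φ, hω]
    _ = ∫⁻ θ, ∫⁻ x, ∫⁻ e, φ (θ, x + e) * h (θ, x, e) ∂μ ∂μ ∂ρ := by
        rw [lintegral_prod (fun ω => φ (ω.1, ω.2.1 + ω.2.2) * h ω)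
          ((hφ.comp hT).mul hh).aemeasurable]
        refine lintegral_congr fun θ => lintegral_prod _ ?_
        exact ((hφ.comp (measurable_const.prodMk (measurable_fst.add measurable_snd))).mul
          (hh.comp measurable_prodMk_left)).aemeasurable
    _ = ∫⁻ θ, ∫⁻ y, ∫⁻ x, φ (θ, y) * h (θ, x, y - x) ∂μ ∂μ ∂ρ := by
        refine lintegral_congr fun θ => ?_
        simp_rw [hshift]
        exact lintegral_lintegral_swap (((hφ.comp (measurable_const.prodMk measurable_snd)).mul
          (hh.comp (measurable_const.prodMk (measurable_fst.prodMk
            (measurable_snd.sub measurable_fst))))).aemeasurable)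
    _ = ((ρ.prod μ).withDensity fun q => ∫⁻ x, h (q.1, x, q.2 - x) ∂μ) S := by
        have hk : Measurable fun r : (Θ × G) × G => h (r.1.1, r.2, r.1.2 - r.2) :=
          hh.comp (measurable_fst.fst.prodMk (measurable_snd.prodMk
            (measurable_fst.snd.sub measurable_snd)))
        rw [withDensity_apply _ hS, ← lintegral_indicator hS,
          lintegral_prod _ (hk.lintegral_prod_right'.indicator hS).aemeasurable]
        refine lintegral_congr fun θ => lintegral_congr fun y => ?_
        by_cases hy : (θ, y) ∈ S <;> simp [φ, hy]

end Convolution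

section JointDensity

variable {Θ 𝒳 : Type*} [MeasureSpace Θ] [MeasureSpace 𝒳] [SFinite (volume : Measure 𝒳)]
  {π : Θ → ℝ} {f : Θ → 𝒳 → ℝ} {πε : 𝒳 → ℝ}

lemma lintegral_prior_model_noise_eq_one (hπ_meas : Measurable π) (hπ_nonneg : ∀ θ, 0 ≤ π θ)
    (hπ_int : ∫ θ, π θ = 1) (hf_meas : Measurable (Function.uncurry f))
    (hf_nonneg : ∀ θ x, 0 ≤ f θ x) (hf_int : ∀ θ, ∫ x, f θ x = 1) (hε_meas : Measurable πε)
    (hε_nonneg : ∀ r, 0 ≤ πε r) (hε_int : ∫ r, πε r = 1) :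
    ∫⁻ ω : Θ × 𝒳 × 𝒳, ENNReal.ofReal (π ω.1 * f ω.1 ω.2.1 * πε ω.2.2) = 1 := by
  have hsplit : ∀ θ x e, ENNReal.ofReal (π θ * f θ x * πε e)
      = ENNReal.ofReal (π θ) * ENNReal.ofReal (f θ x) * ENNReal.ofReal (πε e) := fun θ x e => by
    rw [ENNReal.ofReal_mul (mul_nonneg (hπ_nonneg θ) (hf_nonneg θ x)),
      ENNReal.ofReal_mul (hπ_nonneg θ)]
  have hslice : ∀ θ, ∫⁻ z : 𝒳 × 𝒳,
      ENNReal.ofReal (π θ) * ENNReal.ofReal (f θ z.1) * ENNReal.ofReal (πε z.2)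
      = ENNReal.ofReal (π θ) := fun θ => by
    have hfθ : Measurable (f θ) := hf_meas.comp measurable_prodMk_left
    rw [Measure.volume_eq_prod, lintegral_prod_mul
      (f := fun x => ENNReal.ofReal (π θ) * ENNReal.ofReal (f θ x))
      (measurable_const.mul hfθ.ennreal_ofReal).aemeasurable
      hε_meas.ennreal_ofReal.aemeasurable, lintegral_const_mul _ hfθ.ennreal_ofReal,
      lintegral_ofReal_eq_one (hf_nonneg θ) (hf_int θ), lintegral_ofReal_eq_one hε_nonneg hε_int,
      mul_one, mul_one]
  simp_rw [hsplit]
  rw [Measure.volume_eq_prod, lintegral_prod (fun ω : Θ × 𝒳 × 𝒳 =>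
      ENNReal.ofReal (π ω.1) * ENNReal.ofReal (f ω.1 ω.2.1) * ENNReal.ofReal (πε ω.2.2))
    (((hπ_meas.comp measurable_fst).ennreal_ofReal.mul
      (hf_meas.comp (measurable_fst.prodMk measurable_snd.fst)).ennreal_ofReal).mul
      (hε_meas.comp measurable_snd.snd).ennreal_ofReal).aemeasurable]
  simp_rw [hslice]
  exact lintegral_ofReal_eq_one hπ_nonneg hπ_int

end JointDensity

section Model

variable {Θ 𝒳 : Type*} [MeasureSpace Θ] [MeasureSpace 𝒳] [SFinite (volume : Measure 𝒳)]
  [AddCommGroup 𝒳] [MeasurableSub₂ 𝒳] {π : Θ → ℝ} {f : Θ → 𝒳 → ℝ} {πε : 𝒳 → ℝ} {c : ℝ}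

section Rejection

variable [SFinite (volume : Measure Θ)]

lemma map_restrict_rejection_eq_withDensity (D : 𝒳) (hπ_meas : Measurable π)
    (hπ_nonneg : ∀ θ, 0 ≤ π θ) (hf_meas : Measurable (Function.uncurry f))
    (hf_nonneg : ∀ θ x, 0 ≤ f θ x) (hf_int : ∀ θ, ∫ x, f θ x = 1) (hε_meas : Measurable πε)
    (hε_nonneg : ∀ r, 0 ≤ πε r) (hc : 0 < c) (hεc : ∀ r, πε r ≤ c) :
    Measure.map (fun ω : (Θ × 𝒳) × ℝ => ω.1.1)
      ((((volume : Measure (Θ × 𝒳)).withDensity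
          (fun q => ENNReal.ofReal (π q.1 * f q.1 q.2))).prod
        ((volume : Measure ℝ).restrict (Icc 0 1))).restrict {ω | ω.2 ≤ πε (D - ω.1.2) / c})
      = (volume : Measure Θ).withDensity
          fun θ => ENNReal.ofReal (π θ * (∫ x, πε (D - x) * f θ x) / c) := by
  have hπf_meas : Measurable fun q : Θ × 𝒳 => ENNReal.ofReal (π q.1 * f q.1 q.2) :=
    ((hπ_meas.comp measurable_fst).mul hf_meas).ennreal_ofReal
  have hg_meas : Measurable fun q : Θ × 𝒳 => πε (D - q.2) / c :=
    (hε_meas.comp (measurable_const.sub measurable_snd)).div_const c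
  rw [show (fun ω : (Θ × 𝒳) × ℝ => ω.1.1) = Prod.fst ∘ Prod.fst from rfl,
    ← Measure.map_map measurable_fst measurable_fst,
    map_fst_restrict_prod_uniform_le _ hg_meas fun q => (div_le_one hc).2 (hεc _),
    ← withDensity_mul _ hπf_meas hg_meas.ennreal_ofReal, Measure.volume_eq_prod,
    map_fst_withDensity_prod _ _ (hπf_meas.mul hg_meas.ennreal_ofReal)]
  congr 1
  funext θ
  have hI_int : Integrable (fun x => πε (D - x) * f θ x) :=
    integrable_comp_sub_mul hε_meas hε_nonneg hεc
      (.of_integral_ne_zero ((hf_int θ).symm ▸ one_ne_zero)) D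
  simp only [Pi.mul_apply]
  rw [lintegral_ofReal_mul_ofReal (hπ_nonneg θ) (hf_nonneg θ)
    (fun x => div_nonneg (hε_nonneg _) hc.le)
    (by simpa [div_mul_eq_mul_div] using hI_int.div_const c)]
  simp only [div_mul_eq_mul_div, integral_div, mul_div_assoc']

theorem map_cond_rejection_eq_withDensity (D : 𝒳) (hπ_meas : Measurable π)
    (hπ_nonneg : ∀ θ, 0 ≤ π θ) (hπ : Integrable π) (hf_meas : Measurable (Function.uncurry f))
    (hf_nonneg : ∀ θ x, 0 ≤ f θ x) (hf_int : ∀ θ, ∫ x, f θ x = 1) (hε_meas : Measurable πε)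
    (hε_nonneg : ∀ r, 0 ≤ πε r) (hc : 0 < c) (hεc : ∀ r, πε r ≤ c)
    (hZ_pos : 0 < ∫ θ, π θ * ∫ x, πε (D - x) * f θ x) :
    Measure.map (fun ω : (Θ × 𝒳) × ℝ => ω.1.1)
      (((volume : Measure (Θ × 𝒳)).withDensity
          (fun q => ENNReal.ofReal (π q.1 * f q.1 q.2))).prod
        ((volume : Measure ℝ).restrict (Icc 0 1)))[|{ω | ω.2 ≤ πε (D - ω.1.2) / c}]
    = (volume : Measure Θ).withDensity
        (fun θ => ENNReal.ofReal (π θ * (∫ x, πε (D - x) * f θ x) /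
          (∫ θ', π θ' * ∫ x, πε (D - x) * f θ' x))) := by
  have hmass : ∫ θ, π θ * (∫ x, πε (D - x) * f θ x) / c
      = (∫ θ, π θ * ∫ x, πε (D - x) * f θ x) / c := integral_div _ _
  rw [map_cond _ _ measurable_fst.fst, map_restrict_rejection_eq_withDensity D hπ_meas hπ_nonneg
      hf_meas hf_nonneg hf_int hε_meas hε_nonneg hc hεc,
    inv_univ_smul_withDensity_ofReal _
      ((integrable_mul_integral_comp_sub_mul hπ hf_meas hf_nonneg hf_int hε_meas hε_nonneg hεc
        D).div_const c)
      (fun θ => div_nonneg (mul_nonneg (hπ_nonneg θ)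
        (integral_nonneg fun x => mul_nonneg (hε_nonneg _) (hf_nonneg θ x))) hc.le)
      (hmass ▸ div_pos hZ_pos hc), hmass]
  simp only [div_div_div_cancel_right₀ hc.ne']

end Rejection

section AdditiveNoise

variable [MeasurableAdd₂ 𝒳] [(volume : Measure 𝒳).IsAddLeftInvariant]

lemma map_add_noise_eq_withDensity (hπ_meas : Measurable π) (hπ_nonneg : ∀ θ, 0 ≤ π θ)
    (hf_meas : Measurable (Function.uncurry f)) (hf_nonneg : ∀ θ x, 0 ≤ f θ x)
    (hf_int : ∀ θ, ∫ x, f θ x = 1) (hε_meas : Measurable πε) (hε_nonneg : ∀ r, 0 ≤ πε r)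
    (hεc : ∀ r, πε r ≤ c) :
    Measure.map (fun ω : Θ × 𝒳 × 𝒳 => (ω.1, ω.2.1 + ω.2.2))
        ((volume : Measure (Θ × 𝒳 × 𝒳)).withDensity
          (fun ω => ENNReal.ofReal (π ω.1 * f ω.1 ω.2.1 * πε ω.2.2)))
      = (volume : Measure (Θ × 𝒳)).withDensity
          fun q => ENNReal.ofReal (π q.1 * ∫ x, πε (q.2 - x) * f q.1 x) := by
  have hdens_meas : Measurable fun ω : Θ × 𝒳 × 𝒳 =>
      ENNReal.ofReal (π ω.1 * f ω.1 ω.2.1 * πε ω.2.2) :=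
    (((hπ_meas.comp measurable_fst).mul (hf_meas.comp (measurable_fst.prodMk
      measurable_snd.fst))).mul (hε_meas.comp measurable_snd.snd)).ennreal_ofReal
  refine (map_add_withDensity_prod (volume : Measure Θ) (volume : Measure 𝒳) hdens_meas).trans ?_
  congr 1
  funext q
  simp_rw [ENNReal.ofReal_mul (mul_nonneg (hπ_nonneg q.1) (hf_nonneg q.1 _))]
  exact lintegral_ofReal_mul_ofReal (hπ_nonneg q.1) (hf_nonneg q.1) (fun _ => hε_nonneg _)
    (integrable_comp_sub_mul hε_meas hε_nonneg hεc
      (.of_integral_ne_zero ((hf_int q.1).symm ▸ one_ne_zero)) q.2)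

lemma integrable_prior_mul_integral_comp_sub_mul (hπ_meas : Measurable π)
    (hπ_nonneg : ∀ θ, 0 ≤ π θ) (hπ_int : ∫ θ, π θ = 1) (hf_meas : Measurable (Function.uncurry f))
    (hf_nonneg : ∀ θ x, 0 ≤ f θ x) (hf_int : ∀ θ, ∫ x, f θ x = 1) (hε_meas : Measurable πε)
    (hε_nonneg : ∀ r, 0 ≤ πε r) (hε_int : ∫ r, πε r = 1) (hεc : ∀ r, πε r ≤ c) :
    Integrable fun q : Θ × 𝒳 => π q.1 * ∫ x, πε (q.2 - x) * f q.1 x := by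
  have hG_nonneg : ∀ q : Θ × 𝒳, 0 ≤ π q.1 * ∫ x, πε (q.2 - x) * f q.1 x := fun q =>
    mul_nonneg (hπ_nonneg _) (integral_nonneg fun x => mul_nonneg (hε_nonneg _) (hf_nonneg _ x))
  refine ⟨((hπ_meas.comp measurable_fst).mul
      (measurable_integral_comp_sub_mul hε_meas hf_meas)).aestronglyMeasurable,
    (hasFiniteIntegral_iff_ofReal (ae_of_all _ hG_nonneg)).2 ?_⟩
  have hT : Measurable fun ω : Θ × 𝒳 × 𝒳 => (ω.1, ω.2.1 + ω.2.2) :=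
    measurable_fst.prodMk (measurable_snd.fst.add measurable_snd.snd)
  -- the density of `(θ, X + ε)` has the same total mass as that of `(θ, X, ε)`, namely `1`
  rw [← setLIntegral_univ, ← withDensity_apply _ MeasurableSet.univ,
    ← map_add_noise_eq_withDensity hπ_meas hπ_nonneg hf_meas hf_nonneg hf_int hε_meas hε_nonneg
      hεc,
    Measure.map_apply hT MeasurableSet.univ, preimage_univ, withDensity_apply _ MeasurableSet.univ,
    setLIntegral_univ, lintegral_prior_model_noise_eq_one hπ_meas hπ_nonneg hπ_int hf_meas
      hf_nonneg hf_int hε_meas hε_nonneg hε_int]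
  exact ENNReal.one_lt_top

theorem map_add_noise_apply_prod [SFinite (volume : Measure Θ)] (hπ_meas : Measurable π) (hπ_nonneg : ∀ θ, 0 ≤ π θ)
    (hπ_int : ∫ θ, π θ = 1) (hf_meas : Measurable (Function.uncurry f))
    (hf_nonneg : ∀ θ x, 0 ≤ f θ x) (hf_int : ∀ θ, ∫ x, f θ x = 1) (hε_meas : Measurable πε)
    (hε_nonneg : ∀ r, 0 ≤ πε r) (hε_int : ∫ r, πε r = 1) (hεc : ∀ r, πε r ≤ c) {B : Set Θ}
    {C : Set 𝒳} (hB : MeasurableSet B) (hC : MeasurableSet C) :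
    Measure.map (fun ω : Θ × 𝒳 × 𝒳 => (ω.1, ω.2.1 + ω.2.2))
        ((volume : Measure (Θ × 𝒳 × 𝒳)).withDensity
          (fun ω => ENNReal.ofReal (π ω.1 * f ω.1 ω.2.1 * πε ω.2.2)))
        (B ×ˢ C)
      = ENNReal.ofReal (∫ dd in C,
          (∫ θ', π θ' * ∫ x, πε (dd - x) * f θ' x) *
            ∫ θ in B, π θ * (∫ x, πε (dd - x) * f θ x) /
              (∫ θ', π θ' * ∫ x, πε (dd - x) * f θ' x)) := by
  have hG_nonneg : ∀ q : Θ × 𝒳, 0 ≤ π q.1 * ∫ x, πε (q.2 - x) * f q.1 x := fun q =>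
    mul_nonneg (hπ_nonneg _) (integral_nonneg fun x => mul_nonneg (hε_nonneg _) (hf_nonneg _ x))
  have hG_int : Integrable (fun q : Θ × 𝒳 => π q.1 * ∫ x, πε (q.2 - x) * f q.1 x)
      (((volume : Measure Θ).restrict B).prod ((volume : Measure 𝒳).restrict C)) := by
    rw [Measure.prod_restrict]
    exact (integrable_prior_mul_integral_comp_sub_mul hπ_meas hπ_nonneg hπ_int hf_meas hf_nonneg
      hf_int hε_meas hε_nonneg hε_int hεc).integrableOn
  rw [map_add_noise_eq_withDensity hπ_meas hπ_nonneg hf_meas hf_nonneg hf_int hε_meas hε_nonneg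
      hεc, withDensity_apply _ (hB.prod hC), Measure.volume_eq_prod, ← Measure.prod_restrict,
    ← ofReal_integral_eq_lintegral_ofReal hG_int (ae_of_all _ hG_nonneg),
    integral_prod_symm _ hG_int]
  congr 1
  refine integral_congr_ae (ae_of_all _ fun y => ?_)
  exact (integral_mul_setIntegral_div_integral (integrable_mul_integral_comp_sub_mul
    (.of_integral_ne_zero (hπ_int.symm ▸ one_ne_zero)) hf_meas hf_nonneg hf_int hε_meas
    hε_nonneg hεc y) (fun θ => hG_nonneg (θ, y)) hB).symm

end AdditiveNoise

end Model

theorem abc_exact_under_model_error_general (p d : ℕ)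
    (π : (Fin p → ℝ) → ℝ) (f : (Fin p → ℝ) → (Fin d → ℝ) → ℝ)
    (πε : (Fin d → ℝ) → ℝ) (D : Fin d → ℝ) (c : ℝ)
    (hπ_meas : Measurable π) (hπ_nonneg : ∀ θ, 0 ≤ π θ) (hπ_int : ∫ θ, π θ = 1)
    (hf_meas : Measurable (Function.uncurry f)) (hf_nonneg : ∀ θ x, 0 ≤ f θ x)
    (hf_int : ∀ θ, ∫ x, f θ x = 1)
    (hε_meas : Measurable πε) (hε_nonneg : ∀ r, 0 ≤ πε r) (hε_int : ∫ r, πε r = 1)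
    (hc : 0 < c) (hεc : ∀ r, πε r ≤ c)
    (hZ_pos : 0 < ∫ θ, π θ * ∫ x, πε (D - x) * f θ x) :
    (Measure.map (fun ω : ((Fin p → ℝ) × (Fin d → ℝ)) × ℝ => ω.1.1)
      (ProbabilityTheory.cond
        ((((volume : Measure ((Fin p → ℝ) × (Fin d → ℝ))).withDensity
            (fun q => ENNReal.ofReal (π q.1 * f q.1 q.2))).prod
          ((volume : Measure ℝ).restrict (Set.Icc 0 1))))
        {ω : ((Fin p → ℝ) × (Fin d → ℝ)) × ℝ | ω.2 ≤ πε (D - ω.1.2) / c})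
    = (volume : Measure (Fin p → ℝ)).withDensity
        (fun θ => ENNReal.ofReal (π θ * (∫ x, πε (D - x) * f θ x) /
          (∫ θ', π θ' * ∫ x, πε (D - x) * f θ' x))))
    ∧
    (∀ B : Set (Fin p → ℝ), ∀ C : Set (Fin d → ℝ), MeasurableSet B → MeasurableSet C →
      Measure.map (fun ω : (Fin p → ℝ) × (Fin d → ℝ) × (Fin d → ℝ) => (ω.1, ω.2.1 + ω.2.2))
        ((volume : Measure ((Fin p → ℝ) × (Fin d → ℝ) × (Fin d → ℝ))).withDensity
          (fun ω => ENNReal.ofReal (π ω.1 * f ω.1 ω.2.1 * πε ω.2.2)))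
        (B ×ˢ C)
      = ENNReal.ofReal (∫ dd in C,
          (∫ θ', π θ' * ∫ x, πε (dd - x) * f θ' x) *
            ∫ θ in B, π θ * (∫ x, πε (dd - x) * f θ x) /
              (∫ θ', π θ' * ∫ x, πε (dd - x) * f θ' x))) :=
  ⟨map_cond_rejection_eq_withDensity D hπ_meas hπ_nonneg
      (.of_integral_ne_zero (hπ_int ▸ one_ne_zero)) hf_meas hf_nonneg hf_int hε_meas hε_nonneg
      hc hεc hZ_pos,
    fun _ _ hB hC => map_add_noise_apply_prod hπ_meas hπ_nonneg hπ_int hf_meas hf_nonneg hf_int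
      hε_meas hε_nonneg hε_int hεc hB hC⟩

/-- **Theorem 1 of the paper.** The conditional distribution of θ given acceptance
in the rejection scheme (θ ~ π, X | θ ~ f(·|θ), U ~ Uniform[0,1] independent, accept iff
U ≤ π_ε(D − X)/c) equals the conditional distribution of θ̂ given D' = D in the additive-error
model (θ̂ ~ π, X | θ̂ ~ f(·|θ̂), ε ~ π_ε independent, D' := X + ε): both have density
θ ↦ π(θ) ∫ π_ε(D − x) f(x|θ) dx / Z with Z = ∫ π(θ') ∫ π_ε(D − x) f(x|θ') dx dθ', assumed
positive and finite.  The first conjunct identifies the accepted-θ distribution; the second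
disintegrates the law of (θ̂, D') over D', exhibiting θ ↦ π(θ) ∫ π_ε(d − x) f(x|θ) dx / Z(d)
as the conditional density of θ̂ given D' = d (in particular at d = D it is the same density). -/
theorem abc_exact_under_model_error (p d : ℕ)
    (π : (Fin p → ℝ) → ℝ) (f : (Fin p → ℝ) → (Fin d → ℝ) → ℝ)
    (πε : (Fin d → ℝ) → ℝ) (D : Fin d → ℝ) (c : ℝ)
    (hπ_meas : Measurable π) (hπ_nonneg : ∀ θ, 0 ≤ π θ) (hπ_int : ∫ θ, π θ = 1)
    (hf_meas : Measurable (Function.uncurry f)) (hf_nonneg : ∀ θ x, 0 ≤ f θ x)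
    (hf_int : ∀ θ, ∫ x, f θ x = 1)
    (hε_meas : Measurable πε) (hε_nonneg : ∀ r, 0 ≤ πε r) (hε_int : ∫ r, πε r = 1)
    (hc : 0 < c) (hεc : ∀ r, πε r ≤ c)
    (hZ_pos : 0 < ∫ θ, π θ * ∫ x, πε (D - x) * f θ x)
    (hZ_fin : Integrable (fun θ => π θ * ∫ x, πε (D - x) * f θ x)) :
    (Measure.map (fun ω : ((Fin p → ℝ) × (Fin d → ℝ)) × ℝ => ω.1.1)
      (ProbabilityTheory.cond
        ((((volume : Measure ((Fin p → ℝ) × (Fin d → ℝ))).withDensity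
            (fun q => ENNReal.ofReal (π q.1 * f q.1 q.2))).prod
          ((volume : Measure ℝ).restrict (Set.Icc 0 1))))
        {ω : ((Fin p → ℝ) × (Fin d → ℝ)) × ℝ | ω.2 ≤ πε (D - ω.1.2) / c})
    = (volume : Measure (Fin p → ℝ)).withDensity
        (fun θ => ENNReal.ofReal (π θ * (∫ x, πε (D - x) * f θ x) /
          (∫ θ', π θ' * ∫ x, πε (D - x) * f θ' x))))
    ∧
    (∀ B : Set (Fin p → ℝ), ∀ C : Set (Fin d → ℝ), MeasurableSet B → MeasurableSet C →
      Measure.map (fun ω : (Fin p → ℝ) × (Fin d → ℝ) × (Fin d → ℝ) => (ω.1, ω.2.1 + ω.2.2))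
        ((volume : Measure ((Fin p → ℝ) × (Fin d → ℝ) × (Fin d → ℝ))).withDensity
          (fun ω => ENNReal.ofReal (π ω.1 * f ω.1 ω.2.1 * πε ω.2.2)))
        (B ×ˢ C)
      = ENNReal.ofReal (∫ dd in C,
          (∫ θ', π θ' * ∫ x, πε (dd - x) * f θ' x) *
            ∫ θ in B, π θ * (∫ x, πε (dd - x) * f θ x) /
              (∫ θ', π θ' * ∫ x, πε (dd - x) * f θ' x))) :=
  abc_exact_under_model_error_general p d π f πε D c hπ_meas hπ_nonneg hπ_int hf_meas hf_nonneg
    hf_int hε_meas hε_nonneg hε_int hc hεc hZ_pos
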